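/- Let φ_1,...,φ_k be positive linear maps on B(H) and suppose S ∈ B(H) is positive with (id − φ_1) ∘ ··· ∘ (id − φ_k)(S) ≥ 0, and that φ_1^m(I) → 0 in the weak operator topology. If (id − φ_1) ∘ (id − φ_2) ∘ ··· ∘ (id − φ_k)(S) ≥ 0 and the maps commute, then (id − φ_2) ∘ ··· ∘ (id − φ_k)(S) ≥ 0. -/

import Mathlib

/-!
Write `B = (id − φ₁) ∘ ⋯ ∘ (id − φ_k)(S)`; it is self-adjoint because positive maps preserve
self-adjointness. The hypothesis says `φ₀ B ≤ B`, so by monotonicity `φ₀^m B ≤ B` for every `m`,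
while `-‖B‖ • 1 ≤ B` gives `-‖B‖ • φ₀^m(1) ≤ φ₀^m B`. Hence
`⟪B x, x⟫ ≥ -‖B‖ ⟪φ₀^m(1) x, x⟫ → 0` by purity of `φ₀`.
-/

open Filter

/-- The defect map `(id − φ₁) ∘ ⋯ ∘ (id − φ_k)` built from the tail maps φ₁,…,φ_k of a
family indexed by Fin (k+1) (the 0-th map being excluded). -/
def DTail {H : Type*} [NormedAddCommGroup H] [InnerProductSpace ℂ H] {k : ℕ}
    (φ : Fin (k + 1) → ((H →L[ℂ] H) →ₗ[ℂ] (H →L[ℂ] H))) : (H →L[ℂ] H) → (H →L[ℂ] H) :=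
  (List.finRange k).foldr (fun i f => (fun A => A - φ i.succ A) ∘ f) id

namespace PositiveLinearMap

variable {A : Type*} [CStarAlgebra A] [PartialOrder A] [StarOrderedRing A]

lemma neg_norm_smul_iterate_one_le (ψ : A →ₚ[ℂ] A) {a : A} (ha : IsSelfAdjoint a) (m : ℕ) :
    -(‖a‖ : ℂ) • ψ^[m] 1 ≤ ψ^[m] a := by
  have h := (OrderHomClass.mono ψ).iterate m ha.neg_algebraMap_norm_le_self
  rwa [Algebra.algebraMap_eq_smul_one, ← Complex.coe_smul, ← neg_smul, ← coe_toLinearMap,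
    ← Module.End.pow_apply, map_smul, Module.End.pow_apply] at h

end PositiveLinearMap

section Hilbert

variable {H : Type*} [NormedAddCommGroup H] [InnerProductSpace ℂ H]

lemma ContinuousLinearMap.re_inner_le_re_inner_of_le {S T : H →L[ℂ] H} (h : S ≤ T) (x : H) :
    RCLike.re (inner ℂ (S x) x) ≤ RCLike.re (inner ℂ (T x) x) := by
  simpa [inner_sub_left] using ((le_def S T).mp h).re_inner_nonneg_left x

variable [CompleteSpace H]

theorem nonneg_of_apply_le_of_tendsto_inner_iterate_one {ψ : (H →L[ℂ] H) →ₚ[ℂ] (H →L[ℂ] H)}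
    (hpure : ∀ x : H, Tendsto (fun m : ℕ => inner ℂ ((ψ^[m] 1) x) x) atTop (nhds 0))
    {B : H →L[ℂ] H} (hB : IsSelfAdjoint B) (h : ψ B ≤ B) : 0 ≤ B := by
  rw [ContinuousLinearMap.nonneg_iff_isPositive, ContinuousLinearMap.isPositive_def']
  refine ⟨hB, fun x => ?_⟩
  rw [ContinuousLinearMap.reApplyInnerSelf_apply]
  have hlim : Tendsto (fun m : ℕ => RCLike.re (inner ℂ ((-(‖B‖ : ℂ) • ψ^[m] 1) x) x))
      atTop (nhds 0) := by
    have := ((Complex.continuous_re.tendsto 0).comp (hpure x)).const_mul (-‖B‖)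
    simp only [FunLike.coe_smul, Pi.smul_apply, inner_smul_left]
    simpa using this
  have hiter (m : ℕ) : ψ^[m] B ≤ B := by
    simpa using Function.Commute.iterate_le_of_map_le .id_right
      (OrderHomClass.mono ψ) monotone_id h m
  refine le_of_tendsto' hlim fun m => ContinuousLinearMap.re_inner_le_re_inner_of_le ?_ x
  exact (ψ.neg_norm_smul_iterate_one_le hB m).trans (hiter m)

lemma isSelfAdjoint_dTail {k : ℕ} (φ : Fin (k + 1) → ((H →L[ℂ] H) →ₗ[ℂ] (H →L[ℂ] H)))
    (hφ : ∀ i {A : H →L[ℂ] H}, IsSelfAdjoint A → IsSelfAdjoint (φ i A))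
    {S : H →L[ℂ] H} (hS : IsSelfAdjoint S) : IsSelfAdjoint (DTail φ S) := by
  unfold DTail
  induction List.finRange k with
  | nil => exact hS
  | cons i l ih => exact ih.sub (hφ i.succ ih)

end Hilbert

theorem stmt16_general {H : Type*} [NormedAddCommGroup H] [InnerProductSpace ℂ H] [CompleteSpace H]
    {k : ℕ} (φ : Fin (k + 1) → ((H →L[ℂ] H) →ₗ[ℂ] (H →L[ℂ] H)))
    (hpos : ∀ i (A : H →L[ℂ] H), A.IsPositive → (φ i A).IsPositive)
    (hpure : ∀ x y : H,
      Filter.Tendsto (fun m : ℕ => (inner ℂ (((fun A => φ 0 A)^[m] (1 : H →L[ℂ] H)) x) y : ℂ))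
        Filter.atTop (nhds 0))
    (S : H →L[ℂ] H) (hS : S.IsPositive)
    (hDS : (DTail φ S - φ 0 (DTail φ S)).IsPositive) :
    (DTail φ S).IsPositive := by
  let ψ i : (H →L[ℂ] H) →ₚ[ℂ] (H →L[ℂ] H) := .mk₀ (φ i) fun A hA => by
    rw [ContinuousLinearMap.nonneg_iff_isPositive] at hA ⊢
    exact hpos i A hA
  have hB : IsSelfAdjoint (DTail φ S) :=
    isSelfAdjoint_dTail φ (fun i _ hA => hA.map' (ψ i)) hS.isSelfAdjoint
  rw [← ContinuousLinearMap.nonneg_iff_isPositive] at hDS ⊢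
  exact nonneg_of_apply_le_of_tendsto_inner_iterate_one (ψ := ψ 0) (fun x => hpure x x) hB
    (sub_nonneg.mp hDS)

/-- Let φ₀, φ₁, …, φ_k be commuting positive linear maps on B(H), S positive with
(id−φ₀)∘(id−φ₁)∘⋯∘(id−φ_k)(S) ≥ 0, and φ₀ pure (φ₀^m(I) → 0 weakly). Then
(id−φ₁)∘⋯∘(id−φ_k)(S) ≥ 0. -/
theorem stmt16 {H : Type*} [NormedAddCommGroup H] [InnerProductSpace ℂ H] [CompleteSpace H]
    {k : ℕ} (φ : Fin (k + 1) → ((H →L[ℂ] H) →ₗ[ℂ] (H →L[ℂ] H)))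
    (hcomm : ∀ i j, (φ i).comp (φ j) = (φ j).comp (φ i))
    (hpos : ∀ i (A : H →L[ℂ] H), A.IsPositive → (φ i A).IsPositive)
    (hpure : ∀ x y : H,
      Filter.Tendsto (fun m : ℕ => (inner ℂ (((fun A => φ 0 A)^[m] (1 : H →L[ℂ] H)) x) y : ℂ))
        Filter.atTop (nhds 0))
    (S : H →L[ℂ] H) (hS : S.IsPositive)
    (hDS : (DTail φ S - φ 0 (DTail φ S)).IsPositive) :
    (DTail φ S).IsPositive :=
  stmt16_general φ hpos hpure S hS hDS
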